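/- In the one-player game obtained by fixing a finite-memory Player-2 strategy with M memory states in a non-stochastic game of N vertices in which Player 2 wins the complement of FWMP(ℓ) from every vertex, every path of length M·N·ℓ contains an open window of length ℓ. Equivalently (contrapositive core): if some path of length M·N·ℓ in a graph with M·N vertices contains no open window of length ℓ, then the path visits some vertex twice with all windows closed at both visits, yielding a cycle in which every window closes within ℓ steps; pumping this cycle produces an infinite play satisfying FWMP(ℓ). -/
import Mathlib


/-- Total payoff of the segment of path `ρ` from position `i` to position `m`. -/
def TPseg {V : Type*} (w : V → V → ℚ) (ρ : ℕ → V) (i m : ℕ) : ℚ :=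
  ∑ k ∈ Finset.Ico i m, w (ρ k) (ρ (k + 1))

/-- Position `m` is window-closed: no window is open at `m`. -/
def WindowClosedAt {V : Type*} (w : V → V → ℚ) (ρ : ℕ → V) (m : ℕ) : Prop :=
  ∀ i < m, ∃ k, i < k ∧ k ≤ m ∧ 0 ≤ TPseg w ρ i k

/-- The fixed window mean-payoff objective with window length `ℓ`. -/
def FWMP {V : Type*} (w : V → V → ℚ) (ℓ : ℕ) (π : ℕ → V) : Prop :=
  ∃ K, ∀ i ≥ K, ∃ j, 1 ≤ j ∧ j ≤ ℓ ∧ 0 ≤ TPseg w π i (i + j)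

section Aux
variable {V : Type*} (w : V → V → ℚ) (ρ : ℕ → V)

lemma tpseg_split {i k m : ℕ} (h1 : i ≤ k) (h2 : k ≤ m) :
    TPseg w ρ i m = TPseg w ρ i k + TPseg w ρ k m := by
  unfold TPseg; rw [← Finset.sum_Ico_consecutive _ h1 h2]

lemma tpseg_succ (a j : ℕ) :
    TPseg w ρ a (a + (j+1)) = TPseg w ρ a (a+j) + w (ρ (a+j)) (ρ (a+j+1)) := by
  unfold TPseg
  rw [show a + (j+1) = (a+j)+1 by ring, Finset.sum_Ico_succ_top (by omega)]

lemma tpseg_congr (π : ℕ → V) (a b : ℕ) :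
    ∀ j, (∀ s, s < j → w (π (a+s)) (π (a+s+1)) = w (ρ (b+s)) (ρ (b+s+1))) →
      TPseg w π a (a+j) = TPseg w ρ b (b+j) := by
  intro j
  induction j with
  | zero => intro _; simp [TPseg]
  | succ j ih =>
    intro h
    rw [tpseg_succ, tpseg_succ, ih (fun s hs => h s (by omega)), h j (by omega)]

noncomputable def fClose (L : ℕ)
    (hQ : ∀ i, i < L → ∃ k, i < k ∧ 0 ≤ TPseg w ρ i k) (i : ℕ) : ℕ :=
  if h : i < L then Nat.find (hQ i h) else i + 1

variable (L : ℕ) (hQ : ∀ i, i < L → ∃ k, i < k ∧ 0 ≤ TPseg w ρ i k)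

lemma fClose_lt (i : ℕ) : i < fClose w ρ L hQ i := by
  unfold fClose
  split
  · exact (Nat.find_spec (hQ i ‹_›)).1
  · omega

lemma fClose_spec {i : ℕ} (h : i < L) : 0 ≤ TPseg w ρ i (fClose w ρ L hQ i) := by
  unfold fClose
  rw [dif_pos h]
  exact (Nat.find_spec (hQ i h)).2

lemma fClose_le {i k : ℕ} (h : i < L) (hk : i < k) (hT : 0 ≤ TPseg w ρ i k) :
    fClose w ρ L hQ i ≤ k := by
  unfold fClose
  rw [dif_pos h]
  exact Nat.find_le ⟨hk, hT⟩

lemma fClose_min {i k : ℕ} (h : i < L) (h1 : i < k) (h2 : k < fClose w ρ L hQ i) :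
    TPseg w ρ i k < 0 := by
  rw [fClose, dif_pos h] at h2
  have := Nat.find_min (hQ i h) h2
  push_neg at this
  exact this h1

noncomputable def tSeq : ℕ → ℕ
  | 0 => 0
  | (s+1) => fClose w ρ L hQ (tSeq s)

lemma tSeq_strictMono : StrictMono (tSeq w ρ L hQ) :=
  strictMono_nat_of_lt_succ (fun _ => fClose_lt w ρ L hQ _)

end Aux

/-- If a path of length `M·N·ℓ` in a graph with `M·N` vertices contains no open
window of length `ℓ` (every window closes within `ℓ` steps), then it visits some
vertex twice at window-closed positions, and pumping the cycle between these
positions yields an infinite play satisfying `FWMP(ℓ)`. -/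
theorem stmt_17 {V : Type*} [Fintype V] (w : V → V → ℚ) (ρ : ℕ → V)
    (M N ℓ : ℕ) (hℓ : 1 ≤ ℓ) (hcard : Fintype.card V = M * N) (hMN : 1 ≤ M * N)
    (hclose : ∀ i < M * N * ℓ,
      ∃ j, 1 ≤ j ∧ j ≤ ℓ ∧ i + j ≤ M * N * ℓ ∧ 0 ≤ TPseg w ρ i (i + j)) :
    ∃ p q, p < q ∧ q ≤ M * N * ℓ ∧ ρ p = ρ q ∧
      WindowClosedAt w ρ p ∧ WindowClosedAt w ρ q ∧
      FWMP w ℓ (fun k => if k < p then ρ k else ρ (p + (k - p) % (q - p))) := by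
  classical
  set L := M * N * ℓ with hLdef
  have hQ : ∀ i, i < L → ∃ k, i < k ∧ 0 ≤ TPseg w ρ i k := by
    intro i hi
    obtain ⟨j, hj1, _, _, hT⟩ := hclose i hi
    exact ⟨i + j, by omega, hT⟩
  set f := fClose w ρ L hQ with hfdef
  set t := tSeq w ρ L hQ with htdef
  have htS : ∀ s, t (s+1) = f (t s) := fun s => rfl
  have ht0 : t 0 = 0 := rfl
  have hmono : StrictMono t := tSeq_strictMono w ρ L hQ
  -- bound on f
  have hf_le : ∀ i, i < L → f i ≤ i + ℓ ∧ f i ≤ L := by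
    intro i h
    obtain ⟨j, hj1, hjℓ, hjL, hT⟩ := hclose i h
    have : f i ≤ i + j := fClose_le w ρ L hQ h (by omega) hT
    omega
  -- bound on t
  have ht_bound : ∀ s, s ≤ M * N → t s ≤ s * ℓ := by
    intro s
    induction s with
    | zero => intro _; simp [ht0]
    | succ s ih =>
      intro hs
      have h1 : t s ≤ s * ℓ := ih (by omega)
      have h2 : t s < L := by
        have : s * ℓ < M * N * ℓ := by
          apply Nat.mul_lt_mul_of_lt_of_le (by omega) le_rfl (by omega)
        omega
      have := (hf_le (t s) h2).1
      rw [htS]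
      calc f (t s) ≤ t s + ℓ := this
        _ ≤ s * ℓ + ℓ := by omega
        _ = (s+1) * ℓ := by ring
  have ht_lt_L : ∀ s, s < M * N → t s < L := by
    intro s hs
    have h1 := ht_bound s (by omega)
    have : s * ℓ < M * N * ℓ := Nat.mul_lt_mul_of_lt_of_le hs le_rfl (by omega)
    omega
  -- window-closedness of t s
  have hwc : ∀ s, s ≤ M * N → WindowClosedAt w ρ (t s) := by
    intro s
    induction s with
    | zero => intro _ i hi; rw [ht0] at hi; omega
    | succ s ih =>
      intro hs i hi
      have hsL : t s < L := ht_lt_L s (by omega)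
      have hts : t s < t (s+1) := hmono (by omega)
      rw [htS] at hi
      rcases lt_trichotomy i (t s) with h | h | h
      · obtain ⟨k, hk1, hk2, hk3⟩ := ih (by omega) i h
        exact ⟨k, hk1, by omega, hk3⟩
      · subst h
        exact ⟨t (s+1), hts, le_rfl, by rw [htS]; exact fClose_spec w ρ L hQ hsL⟩
      · refine ⟨t (s+1), by rw [htS]; exact hi, le_rfl, ?_⟩
        have h1 : 0 ≤ TPseg w ρ (t s) (f (t s)) := fClose_spec w ρ L hQ hsL
        have h2 : TPseg w ρ (t s) i < 0 := fClose_min w ρ L hQ hsL h hi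
        have h3 : TPseg w ρ (t s) (f (t s)) =
            TPseg w ρ (t s) i + TPseg w ρ i (f (t s)) :=
          tpseg_split w ρ (le_of_lt h) (le_of_lt hi)
        rw [htS]
        linarith
  -- pigeonhole
  have hcardlt : Fintype.card V < Fintype.card (Fin (M * N + 1)) := by
    simp [hcard]
  obtain ⟨a, b, hne, heq⟩ :=
    Fintype.exists_ne_map_eq_of_card_lt (fun s : Fin (M * N + 1) => ρ (t s.val)) (by simpa using hcardlt)
  -- wlog a < b
  obtain ⟨a, b, hab, heq⟩ : ∃ a b : ℕ, a < b ∧ b ≤ M * N ∧ ρ (t a) = ρ (t b) := by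
    rcases lt_or_gt_of_ne hne with h | h
    · exact ⟨a.val, b.val, h, by omega, heq⟩
    · exact ⟨b.val, a.val, h, by omega, heq.symm⟩
  obtain ⟨hbMN, heq⟩ := heq
  set p := t a with hpdef
  set q := t b with hqdef
  have hpq : p < q := hmono hab
  have hqL : q ≤ L := by
    have h1 := ht_bound b hbMN
    have : b * ℓ ≤ M * N * ℓ := Nat.mul_le_mul_right ℓ hbMN
    omega
  -- middle lemma: locating i between consecutive t's
  have hmid : ∀ b', ∀ a', a' < b' → ∀ i, t a' ≤ i → i < t b' →
      ∃ s, a' ≤ s ∧ s < b' ∧ t s ≤ i ∧ i < t (s+1) := by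
    intro b'
    induction b' with
    | zero => intro a' ha'; omega
    | succ b' ih =>
      intro a' ha' i h1 h2
      rcases Nat.lt_succ_iff_lt_or_eq.mp ha' with h | h
      · by_cases hc : i < t b'
        · obtain ⟨s, hs1, hs2, hs3, hs4⟩ := ih a' h i h1 hc
          exact ⟨s, hs1, by omega, hs3, hs4⟩
        · exact ⟨b', by omega, by omega, by omega, h2⟩
      · subst h
        exact ⟨a', le_rfl, by omega, h1, h2⟩
  -- Lemma A: windows inside [p, q) close within ℓ steps without leaving [p, q]
  have hA : ∀ i, p ≤ i → i < q → ∃ k, i < k ∧ k ≤ i + ℓ ∧ k ≤ q ∧ 0 ≤ TPseg w ρ i k := by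
    intro i h1 h2
    obtain ⟨s, hs1, hs2, hs3, hs4⟩ := hmid b a hab i h1 h2
    have hsL : t s < L := by omega
    have hfle := (hf_le (t s) hsL).1
    have htsq : t (s+1) ≤ q := hmono.monotone (by omega)
    have hspec : 0 ≤ TPseg w ρ (t s) (t (s+1)) := by
      rw [htS]; exact fClose_spec w ρ L hQ hsL
    rcases eq_or_lt_of_le hs3 with he | hlt
    · refine ⟨t (s+1), by omega, ?_, htsq, by rw [← he]; exact hspec⟩
      rw [htS]; omega
    · refine ⟨t (s+1), hs4, ?_, htsq, ?_⟩
      · rw [htS]; omega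
      · have hs4' : i < fClose w ρ L hQ (t s) := by rw [← hfdef, ← htS]; exact hs4
        have h2' : TPseg w ρ (t s) i < 0 := fClose_min w ρ L hQ hsL hlt hs4'
        have h3 : TPseg w ρ (t s) (t (s+1)) =
            TPseg w ρ (t s) i + TPseg w ρ i (t (s+1)) :=
          tpseg_split w ρ (le_of_lt hlt) (le_of_lt hs4)
        linarith
  refine ⟨p, q, hpq, hqL, heq, hwc a (by omega), hwc b hbMN, ?_⟩
  -- FWMP for the pumped path
  set d := q - p with hddef
  have hd : 0 < d := by omega
  have hqpd : q = p + d := by omega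
  set π : ℕ → V := fun k => if k < p then ρ k else ρ (p + (k - p) % (q - p)) with hπdef
  have hπ : ∀ k, p ≤ k → π k = ρ (p + (k - p) % d) := by
    intro k hk
    simp only [hπdef]
    rw [if_neg (by omega)]
  -- modular arithmetic helpers
  have hmod : ∀ s u : ℕ, s % d + u < d → (s + u) % d = s % d + u := by
    intro s u hu
    conv_lhs => rw [← Nat.mod_add_div s d]
    rw [show s % d + d * (s / d) + u = (s % d + u) + d * (s / d) by ring,
      Nat.add_mul_mod_self_left, Nat.mod_eq_of_lt hu]
  -- edge weights of π on the cycle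
  have hedge : ∀ s : ℕ, w (π (p + s)) (π (p + s + 1)) =
      w (ρ (p + s % d)) (ρ (p + s % d + 1)) := by
    intro s
    have e1 : p + s - p = s := by omega
    have e2 : p + s + 1 - p = s + 1 := by omega
    have h1 : π (p + s) = ρ (p + s % d) := by
      rw [hπ _ (by omega), e1]
    have h2 : π (p + s + 1) = ρ (p + (s + 1) % d) := by
      rw [hπ _ (by omega), e2]
    rw [h1, h2]
    have hrd : s % d < d := Nat.mod_lt _ hd
    by_cases hc : s % d + 1 < d
    · rw [hmod s 1 hc, ← Nat.add_assoc]
    · have heqd : s % d + 1 = d := by omega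
      have h0 : (s + 1) % d = 0 := by
        conv_lhs => rw [← Nat.mod_add_div s d]
        rw [show s % d + d * (s / d) + 1 = (s % d + 1) + d * (s / d) by ring,
          Nat.add_mul_mod_self_left, heqd, Nat.mod_self]
      rw [h0]
      congr 1
      rw [show p + 0 = p from rfl, show p + s % d + 1 = q from by omega]
      exact heq
  -- windows with no wrap
  have hwin : ∀ s j : ℕ, s % d + j ≤ d →
      TPseg w π (p + s) (p + s + j) = TPseg w ρ (p + s % d) (p + s % d + j) := by
    intro s j hj
    exact tpseg_congr w ρ π (p + s) (p + s % d) j (fun u hu => by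
      have h1 : (s + u) % d = s % d + u := hmod s u (by omega)
      have h2 : p + s + u = p + (s + u) := by ring
      rw [h2, hedge (s + u), h1]
      congr 2 <;> omega)
  refine ⟨p, fun i hi => ?_⟩
  set s := i - p with hsdef
  have his : i = p + s := by omega
  have hi0 : p + s % d < q := by
    have : s % d < d := Nat.mod_lt _ hd
    omega
  obtain ⟨k, hk1, hk2, hk3, hk4⟩ := hA (p + s % d) (by omega) hi0
  set j := k - (p + s % d) with hjdef
  refine ⟨j, by omega, by omega, ?_⟩
  have hnw : s % d + j ≤ d := by omega
  have := hwin s j hnw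
  rw [his]
  rw [show p + s + j = p + s + j from rfl]
  rw [this, show p + s % d + j = k by omega]
  exact hk4
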